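/- arXiv:2102.00143 — 6 statements merged into one kernel-verified Lean document; each statement's English description precedes it below -/
import Mathlib

section
/- (Block-Marschak nonnegativity is necessary for RU) If μ ∈ Δ(P) is a random utility representation of ρ, then for all x ∈ A^C with A^C nonempty, the Block-Marschak sum M_{x,A} := ∑_{B ⊇ A^C} (-1)^{|B \ A^C|} ρ(x,B) is nonnegative; indeed M_{x,A} = μ({≻ : a ≻ x for all a ∈ A, and x ≻ z for all z ∈ A^C \ {x}}). -/
open Finset

def Pref (X : Type) [Fintype X] [DecidableEq X] : Type :=
  {r : X → X → Bool // (∀ a b c, r a b → r b c → r a c) ∧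
    (∀ a b, r a b → ¬ r b a) ∧ (∀ a b, a ≠ b → (r a b ∨ r b a))}

instance (X : Type) [Fintype X] [DecidableEq X] : Fintype (Pref X) := by
  unfold Pref; infer_instance

lemma aux_pow_sum {α : Type*} [DecidableEq α] (T : Finset α) :
    (∑ m ∈ T.powerset, (-1 : ℝ) ^ m.card) = if T = ∅ then 1 else 0 := by
  have h := Finset.sum_powerset_neg_one_pow_card (x := T)
  have h2 : (∑ m ∈ T.powerset, (-1 : ℝ) ^ m.card)
      = ((∑ m ∈ T.powerset, (-1 : ℤ) ^ m.card : ℤ) : ℝ) := by push_cast; rfl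
  rw [h2, h]
  split_ifs <;> simp

theorem stmt5 (X : Type) [Fintype X] [DecidableEq X]
    (μ : Pref X → ℝ) (hμ0 : ∀ p, 0 ≤ μ p) (hμ1 : ∑ p, μ p = 1)
    (ρ : X → Finset X → ℝ)
    (hrep : ∀ (B : Finset X), B.Nonempty → ∀ y ∈ B,
      ρ y B = ∑ p ∈ Finset.univ.filter
        (fun p : Pref X => ∀ z ∈ B, z ≠ y → p.1 y z), μ p)
    (A : Finset X) (x : X) (hx : x ∈ Aᶜ) :
    (∑ B ∈ Finset.univ.filter (fun B : Finset X => Aᶜ ⊆ B),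
        (-1 : ℝ) ^ (B \ Aᶜ).card * ρ x B) =
      (∑ p ∈ Finset.univ.filter
        (fun p : Pref X => (∀ a ∈ A, p.1 a x) ∧ ∀ z ∈ Aᶜ, z ≠ x → p.1 x z), μ p) ∧
    0 ≤ ∑ B ∈ Finset.univ.filter (fun B : Finset X => Aᶜ ⊆ B),
        (-1 : ℝ) ^ (B \ Aᶜ).card * ρ x B := by
  have hxA : x ∉ A := by simpa using hx
  -- step 1: reindex B = Aᶜ ∪ S, S ⊆ A
  have h1 : (∑ B ∈ Finset.univ.filter (fun B : Finset X => Aᶜ ⊆ B),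
        (-1 : ℝ) ^ (B \ Aᶜ).card * ρ x B)
      = ∑ S ∈ A.powerset, (-1 : ℝ) ^ S.card * ρ x (Aᶜ ∪ S) := by
    refine Finset.sum_nbij' (fun B => B \ Aᶜ) (fun S => Aᶜ ∪ S) ?_ ?_ ?_ ?_ ?_
    · intro B hB
      simp only [mem_filter, mem_univ, true_and] at hB
      simp only [mem_powerset]
      intro z hz
      simp only [mem_sdiff, mem_compl] at hz
      simpa using hz.2
    · intro S hS
      simp only [mem_powerset] at hS
      simp only [mem_filter, mem_univ, true_and]
      exact subset_union_left
    · intro B hB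
      simp only [mem_filter, mem_univ, true_and] at hB
      exact Finset.union_sdiff_of_subset hB
    · intro S hS
      simp only [mem_powerset] at hS
      ext z
      simp only [mem_sdiff, mem_union, mem_compl]
      constructor
      · rintro ⟨h1 | h1, h2⟩
        · exact absurd h1 (by simpa using h2)
        · exact h1
      · intro hz
        exact ⟨Or.inr hz, by simpa using hS hz⟩
    · intro B hB
      simp only [mem_filter, mem_univ, true_and] at hB
      rw [Finset.union_sdiff_of_subset hB]
  rw [h1]
  -- step 2: plug in hrep and swap sums
  have h2 : ∀ S ∈ A.powerset, (-1 : ℝ) ^ S.card * ρ x (Aᶜ ∪ S)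
      = ∑ p : Pref X, (if ∀ z ∈ Aᶜ ∪ S, z ≠ x → p.1 x z
          then (-1 : ℝ) ^ S.card * μ p else 0) := by
    intro S hS
    rw [hrep (Aᶜ ∪ S) ⟨x, mem_union_left _ hx⟩ x (mem_union_left _ hx),
      Finset.sum_filter, Finset.mul_sum]
    refine Finset.sum_congr rfl fun p _ => ?_
    split_ifs <;> simp
  rw [Finset.sum_congr rfl h2, Finset.sum_comm]
  have key : ∀ p : Pref X,
      (∑ S ∈ A.powerset, if ∀ z ∈ Aᶜ ∪ S, z ≠ x → p.1 x z
          then (-1 : ℝ) ^ S.card * μ p else 0)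
      = if (∀ a ∈ A, p.1 a x) ∧ (∀ z ∈ Aᶜ, z ≠ x → p.1 x z) then μ p else 0 := by
    intro p
    by_cases hC : ∀ z ∈ Aᶜ, z ≠ x → p.1 x z
    · -- condition on S reduces to S ⊆ T
      set T := A.filter (fun a => p.1 x a) with hT
      have hcond : ∀ S ∈ A.powerset,
          ((∀ z ∈ Aᶜ ∪ S, z ≠ x → p.1 x z) ↔ S ⊆ T) := by
        intro S hS
        simp only [mem_powerset] at hS
        constructor
        · intro h s hs
          have hsA : s ∈ A := hS hs
          have hsx : s ≠ x := fun e => hxA (e ▸ hsA)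
          exact mem_filter.2 ⟨hsA, h s (mem_union_right _ hs) hsx⟩
        · intro h z hz hzx
          rcases mem_union.1 hz with h1 | h1
          · exact hC z h1 hzx
          · exact (mem_filter.1 (h h1)).2
      have : (∑ S ∈ A.powerset, if ∀ z ∈ Aᶜ ∪ S, z ≠ x → p.1 x z
            then (-1 : ℝ) ^ S.card * μ p else 0)
          = ∑ S ∈ T.powerset, (-1 : ℝ) ^ S.card * μ p := by
        rw [← Finset.sum_filter]
        refine Finset.sum_congr ?_ fun _ _ => rfl
        ext S
        simp only [mem_filter, mem_powerset]
        constructor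
        · rintro ⟨h1, h2⟩; exact (hcond S (mem_powerset.2 h1)).1 h2
        · intro h
          have hSA : S ⊆ A := h.trans (filter_subset _ _)
          exact ⟨hSA, (hcond S (mem_powerset.2 hSA)).2 h⟩
      rw [this, ← Finset.sum_mul, aux_pow_sum]
      have hTe : T = ∅ ↔ ∀ a ∈ A, p.1 a x := by
        simp only [hT, Finset.filter_eq_empty_iff]
        constructor
        · intro h a ha
          have hax : a ≠ x := fun e => hxA (e ▸ ha)
          rcases p.2.2.2 a x hax with h1 | h1
          · exact h1
          · exact absurd h1 (h ha)
        · intro h a ha hpx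
          exact p.2.2.1 a x (h a ha) hpx
      by_cases hTE : T = ∅
      · rw [if_pos hTE, if_pos ⟨hTe.1 hTE, hC⟩, one_mul]
      · rw [if_neg hTE, if_neg (fun ⟨h1, _⟩ => hTE (hTe.2 h1)), zero_mul]
    · -- condition fails for every S
      rw [if_neg (fun h => hC h.2)]
      refine Finset.sum_eq_zero fun S hS => ?_
      rw [if_neg]
      intro h
      exact hC fun z hz hzx => h z (mem_union_left _ hz) hzx
  rw [Finset.sum_congr rfl (fun p _ => key p), ← Finset.sum_filter]
  refine ⟨rfl, ?_⟩
  exact Finset.sum_nonneg fun p _ => hμ0 p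
end

section
/- (Proposition 2: Second-period Block-Marschak balance) For any x₁ ∈ A₁^C ≠ ∅ and any A₂ with ∅ ⊊ A₂ ⊊ X₂: ∑_{x₂ ∈ A₂^C} M_{x₁,A₁;x₂,A₂} = ∑_{y₂ ∈ A₂} M_{x₁,A₁;y₂,A₂\{y₂}}, where M is the joint Block-Marschak sum and each ρ₂(·,B₂|B₁,x₁) is a probability distribution on B₂ (so ∑_{y ∈ B₂} ρ₂(y,B₂|B₁,x₁) = 1). -/
open Finset

lemma aux_signsum {X : Type} [Fintype X] [DecidableEq X] (A : Finset X) (hA : A.Nonempty) :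
    ∑ B ∈ Finset.univ.filter (fun B : Finset X => Aᶜ ⊆ B), (-1:ℝ)^((B \ Aᶜ).card) = 0 := by
  have h1 : ∑ B ∈ Finset.univ.filter (fun B : Finset X => Aᶜ ⊆ B), (-1:ℝ)^((B \ Aᶜ).card)
      = ∑ T ∈ A.powerset, (-1:ℝ)^T.card := by
    apply Finset.sum_nbij' (fun B => B \ Aᶜ) (fun T => T ∪ Aᶜ)
    · intro B hB
      simp only [Finset.mem_powerset]
      intro x hx
      rw [Finset.mem_sdiff] at hx
      simpa using hx.2
    · intro T hT
      simp only [Finset.mem_filter, Finset.mem_univ, true_and]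
      exact Finset.subset_union_right
    · intro B hB
      simp only [Finset.mem_filter, Finset.mem_univ, true_and] at hB
      exact Finset.sdiff_union_of_subset hB
    · intro T hT
      rw [Finset.mem_powerset] at hT
      ext x
      simp only [Finset.mem_sdiff, Finset.mem_union, Finset.mem_compl]
      constructor
      · rintro ⟨h | h, h2⟩
        · exact h
        · exact absurd h h2
      · intro hx
        exact ⟨Or.inl hx, by simpa using hT hx⟩
    · intro B hB; rfl
  rw [h1]
  have h2 := Finset.sum_powerset_neg_one_pow_card_of_nonempty hA
  have h3 : ((∑ m ∈ A.powerset, (-1:ℤ)^m.card : ℤ) : ℝ) = 0 := by rw [h2]; norm_num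
  push_cast at h3
  exact h3

lemma aux_key {X : Type} [Fintype X] [DecidableEq X] (r : X → Finset X → ℝ)
    (hsum : ∀ B : Finset X, B.Nonempty → ∑ y ∈ B, r y B = 1)
    (A : Finset X) (hA : A.Nonempty) (hA' : A ≠ Finset.univ) :
    ∑ x ∈ Aᶜ, ∑ B ∈ Finset.univ.filter (fun B : Finset X => Aᶜ ⊆ B),
        (-1:ℝ)^((B \ Aᶜ).card) * r x B
    = ∑ y ∈ A, ∑ B ∈ Finset.univ.filter (fun B : Finset X => (A.erase y)ᶜ ⊆ B),
        (-1:ℝ)^((B \ (A.erase y)ᶜ).card) * r y B := by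
  have hAc : Aᶜ.Nonempty := by
    rw [Finset.nonempty_iff_ne_empty]
    intro h
    exact hA' (by rwa [Finset.compl_eq_empty_iff] at h)
  set S := Finset.univ.filter (fun B : Finset X => Aᶜ ⊆ B) with hS
  have hSB : ∀ B ∈ S, Aᶜ ⊆ B := by
    intro B hB
    simpa [hS] using hB
  have hsplit : ∀ B ∈ S, (∑ y ∈ A ∩ B, r y B) = 1 - ∑ x ∈ Aᶜ, r x B := by
    intro B hB
    have hBc := hSB B hB
    have hdisj : Disjoint (A ∩ B) Aᶜ :=
      disjoint_compl_right.mono_left Finset.inter_subset_left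
    have hunion : (A ∩ B) ∪ Aᶜ = B := by
      ext x
      simp only [Finset.mem_union, Finset.mem_inter, Finset.mem_compl]
      constructor
      · rintro (⟨_, h⟩ | h)
        · exact h
        · exact hBc (by simpa using h)
      · intro hxB
        by_cases hxA : x ∈ A
        · exact Or.inl ⟨hxA, hxB⟩
        · exact Or.inr hxA
    have hBne : B.Nonempty := hAc.mono hBc
    have h1 : ∑ x ∈ (A ∩ B) ∪ Aᶜ, r x B = 1 := by rw [hunion]; exact hsum B hBne
    rw [Finset.sum_union hdisj] at h1
    linarith
  have hRHS : ∀ y ∈ A,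
      ∑ B ∈ Finset.univ.filter (fun B : Finset X => (A.erase y)ᶜ ⊆ B),
          (-1:ℝ)^((B \ (A.erase y)ᶜ).card) * r y B
      = ∑ B ∈ S, (if y ∈ B then -((-1:ℝ)^((B \ Aᶜ).card) * r y B) else 0) := by
    intro y hy
    rw [← Finset.sum_filter]
    have h1 : Finset.univ.filter (fun B : Finset X => (A.erase y)ᶜ ⊆ B)
        = S.filter (fun B => y ∈ B) := by
      rw [hS, Finset.filter_filter]
      apply Finset.filter_congr
      intro B _
      rw [Finset.compl_erase, Finset.insert_subset_iff]
      tauto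
    rw [h1]
    apply Finset.sum_congr rfl
    intro B hB
    simp only [Finset.mem_filter, hS, Finset.mem_univ, true_and] at hB
    have hyB : y ∈ B \ Aᶜ := Finset.mem_sdiff.2 ⟨hB.2, by simp [hy]⟩
    have h2 : B \ (A.erase y)ᶜ = (B \ Aᶜ).erase y := by
      rw [Finset.compl_erase, Finset.sdiff_insert]
    have h3 : ((B \ Aᶜ).erase y).card + 1 = (B \ Aᶜ).card := Finset.card_erase_add_one hyB
    rw [h2, ← h3, pow_succ]
    ring
  calc ∑ x ∈ Aᶜ, ∑ B ∈ S, (-1:ℝ)^((B \ Aᶜ).card) * r x B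
      = ∑ B ∈ S, (-1:ℝ)^((B \ Aᶜ).card) * ∑ x ∈ Aᶜ, r x B := by
        rw [Finset.sum_comm]
        exact Finset.sum_congr rfl fun B _ => (Finset.mul_sum _ _ _).symm
    _ = ∑ B ∈ S, (-((-1:ℝ)^((B \ Aᶜ).card)) * (1 - ∑ x ∈ Aᶜ, r x B)
          + (-1:ℝ)^((B \ Aᶜ).card)) := by
        apply Finset.sum_congr rfl
        intro B hB
        have := hsplit B hB
        ring
    _ = ∑ B ∈ S, (-((-1:ℝ)^((B \ Aᶜ).card)) * (1 - ∑ x ∈ Aᶜ, r x B)) := by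
        rw [Finset.sum_add_distrib, aux_signsum A hA, add_zero]
    _ = ∑ B ∈ S, (-((-1:ℝ)^((B \ Aᶜ).card)) * ∑ y ∈ A ∩ B, r y B) := by
        apply Finset.sum_congr rfl
        intro B hB
        rw [hsplit B hB]
    _ = ∑ B ∈ S, ∑ y ∈ A, (if y ∈ B then -((-1:ℝ)^((B \ Aᶜ).card) * r y B) else 0) := by
        apply Finset.sum_congr rfl
        intro B hB
        rw [← Finset.filter_mem_eq_inter, Finset.mul_sum, ← Finset.sum_filter]
        apply Finset.sum_congr rfl
        intro y hy
        ring
    _ = ∑ y ∈ A, ∑ B ∈ S, (if y ∈ B then -((-1:ℝ)^((B \ Aᶜ).card) * r y B) else 0) :=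
        Finset.sum_comm
    _ = ∑ y ∈ A, ∑ B ∈ Finset.univ.filter (fun B : Finset X => (A.erase y)ᶜ ⊆ B),
          (-1:ℝ)^((B \ (A.erase y)ᶜ).card) * r y B :=
        (Finset.sum_congr rfl hRHS).symm

theorem stmt8 (X₁ X₂ : Type) [Fintype X₁] [DecidableEq X₁] [Fintype X₂] [DecidableEq X₂]
    (ρ₁ : X₁ → Finset X₁ → ℝ)
    (ρ₂ : X₂ → Finset X₂ → Finset X₁ → X₁ → ℝ)
    (hρ₂sum : ∀ (B₁ : Finset X₁) (x₁ : X₁) (B₂ : Finset X₂), B₂.Nonempty →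
      ∑ y ∈ B₂, ρ₂ y B₂ B₁ x₁ = 1)
    (hρ₂supp : ∀ (B₁ : Finset X₁) (x₁ : X₁) (B₂ : Finset X₂) (y : X₂), y ∉ B₂ →
      ρ₂ y B₂ B₁ x₁ = 0)
    (hρ₂nn : ∀ B₁ x₁ B₂ y, 0 ≤ ρ₂ y B₂ B₁ x₁)
    (M : X₁ → Finset X₁ → X₂ → Finset X₂ → ℝ)
    (hM : ∀ x₁ A₁ x₂ A₂, M x₁ A₁ x₂ A₂ =
      ∑ B₁ ∈ Finset.univ.filter (fun B₁ : Finset X₁ => A₁ᶜ ⊆ B₁),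
        ∑ B₂ ∈ Finset.univ.filter (fun B₂ : Finset X₂ => A₂ᶜ ⊆ B₂),
          (-1 : ℝ) ^ ((B₁ \ A₁ᶜ).card + (B₂ \ A₂ᶜ).card) *
            (ρ₂ x₂ B₂ B₁ x₁ * ρ₁ x₁ B₁))
    (A₁ : Finset X₁) (x₁ : X₁) (hx₁ : x₁ ∈ A₁ᶜ)
    (A₂ : Finset X₂) (hA₂ : A₂.Nonempty) (hA₂' : A₂ ≠ Finset.univ) :
    ∑ x₂ ∈ A₂ᶜ, M x₁ A₁ x₂ A₂ = ∑ y₂ ∈ A₂, M x₁ A₁ y₂ (A₂.erase y₂) := by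
  simp only [hM]
  rw [Finset.sum_comm]
  rw [show (∑ y₂ ∈ A₂, ∑ B₁ ∈ Finset.univ.filter (fun B₁ : Finset X₁ => A₁ᶜ ⊆ B₁),
      ∑ B₂ ∈ Finset.univ.filter (fun B₂ : Finset X₂ => (A₂.erase y₂)ᶜ ⊆ B₂),
        (-1 : ℝ) ^ ((B₁ \ A₁ᶜ).card + (B₂ \ (A₂.erase y₂)ᶜ).card) *
          (ρ₂ y₂ B₂ B₁ x₁ * ρ₁ x₁ B₁))
    = ∑ B₁ ∈ Finset.univ.filter (fun B₁ : Finset X₁ => A₁ᶜ ⊆ B₁), ∑ y₂ ∈ A₂,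
      ∑ B₂ ∈ Finset.univ.filter (fun B₂ : Finset X₂ => (A₂.erase y₂)ᶜ ⊆ B₂),
        (-1 : ℝ) ^ ((B₁ \ A₁ᶜ).card + (B₂ \ (A₂.erase y₂)ᶜ).card) *
          (ρ₂ y₂ B₂ B₁ x₁ * ρ₁ x₁ B₁) from Finset.sum_comm]
  apply Finset.sum_congr rfl
  intro B₁ hB₁
  have key := aux_key (fun y B₂ => ρ₂ y B₂ B₁ x₁)
    (fun B₂ h => hρ₂sum B₁ x₁ B₂ h) A₂ hA₂ hA₂'
  calc ∑ x₂ ∈ A₂ᶜ, ∑ B₂ ∈ Finset.univ.filter (fun B₂ : Finset X₂ => A₂ᶜ ⊆ B₂),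
        (-1 : ℝ) ^ ((B₁ \ A₁ᶜ).card + (B₂ \ A₂ᶜ).card) * (ρ₂ x₂ B₂ B₁ x₁ * ρ₁ x₁ B₁)
      = ((-1:ℝ)^((B₁ \ A₁ᶜ).card) * ρ₁ x₁ B₁) *
        ∑ x₂ ∈ A₂ᶜ, ∑ B₂ ∈ Finset.univ.filter (fun B₂ : Finset X₂ => A₂ᶜ ⊆ B₂),
          (-1:ℝ)^((B₂ \ A₂ᶜ).card) * ρ₂ x₂ B₂ B₁ x₁ := by
        rw [Finset.mul_sum]
        apply Finset.sum_congr rfl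
        intro x₂ _
        rw [Finset.mul_sum]
        apply Finset.sum_congr rfl
        intro B₂ _
        rw [pow_add]
        ring
    _ = ((-1:ℝ)^((B₁ \ A₁ᶜ).card) * ρ₁ x₁ B₁) *
        ∑ y₂ ∈ A₂, ∑ B₂ ∈ Finset.univ.filter (fun B₂ : Finset X₂ => (A₂.erase y₂)ᶜ ⊆ B₂),
          (-1:ℝ)^((B₂ \ (A₂.erase y₂)ᶜ).card) * ρ₂ y₂ B₂ B₁ x₁ := by
        rw [key]
    _ = ∑ y₂ ∈ A₂, ∑ B₂ ∈ Finset.univ.filter (fun B₂ : Finset X₂ => (A₂.erase y₂)ᶜ ⊆ B₂),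
        (-1 : ℝ) ^ ((B₁ \ A₁ᶜ).card + (B₂ \ (A₂.erase y₂)ᶜ).card) *
          (ρ₂ y₂ B₂ B₁ x₁ * ρ₁ x₁ B₁) := by
        rw [Finset.mul_sum]
        apply Finset.sum_congr rfl
        intro y₂ _
        rw [Finset.mul_sum]
        apply Finset.sum_congr rfl
        intro B₂ _
        rw [pow_add]
        ring
end

section
/- (Claim 1: First-period Block-Marschak balance under marginal consistency) Suppose the pair (ρ₁, ρ₂) satisfies marginal consistency: ∑_{x₁ ∈ A₁} ρ₂(x₂,A₂|A₁,x₁)ρ₁(x₁,A₁) is independent of A₁ for all x₂ ∈ A₂. Then for all x₂ ∈ A₂^C ≠ ∅ and ∅ ⊊ A₁ ⊊ X₁: ∑_{x₁ ∈ A₁^C} M_{x₁,A₁;x₂,A₂} = ∑_{y₁ ∈ A₁} M_{y₁,A₁\{y₁};x₂,A₂}. -/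
open Finset

theorem stmt10 (X₁ X₂ : Type) [Fintype X₁] [DecidableEq X₁] [Fintype X₂] [DecidableEq X₂]
    (ρ₁ : X₁ → Finset X₁ → ℝ)
    (hρ₁sum : ∀ B₁ : Finset X₁, B₁.Nonempty → ∑ x ∈ B₁, ρ₁ x B₁ = 1)
    (hρ₁supp : ∀ (B₁ : Finset X₁) (x : X₁), x ∉ B₁ → ρ₁ x B₁ = 0)
    (hρ₁nn : ∀ B₁ x, 0 ≤ ρ₁ x B₁)
    (ρ₂ : X₂ → Finset X₂ → Finset X₁ → X₁ → ℝ)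
    (hρ₂sum : ∀ (B₁ : Finset X₁) (x₁ : X₁) (B₂ : Finset X₂), B₂.Nonempty →
      ∑ y ∈ B₂, ρ₂ y B₂ B₁ x₁ = 1)
    (hρ₂supp : ∀ (B₁ : Finset X₁) (x₁ : X₁) (B₂ : Finset X₂) (y : X₂), y ∉ B₂ →
      ρ₂ y B₂ B₁ x₁ = 0)
    (hρ₂nn : ∀ B₁ x₁ B₂ y, 0 ≤ ρ₂ y B₂ B₁ x₁)
    (hMC : ∀ (x₂ : X₂) (A₂ : Finset X₂), x₂ ∈ A₂ →
      ∀ (A₁ A₁' : Finset X₁), A₁.Nonempty → A₁'.Nonempty →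
        ∑ x₁ ∈ A₁, ρ₂ x₂ A₂ A₁ x₁ * ρ₁ x₁ A₁ =
          ∑ x₁ ∈ A₁', ρ₂ x₂ A₂ A₁' x₁ * ρ₁ x₁ A₁')
    (M : X₁ → Finset X₁ → X₂ → Finset X₂ → ℝ)
    (hM : ∀ x₁ A₁ x₂ A₂, M x₁ A₁ x₂ A₂ =
      ∑ B₁ ∈ Finset.univ.filter (fun B₁ : Finset X₁ => A₁ᶜ ⊆ B₁),
        ∑ B₂ ∈ Finset.univ.filter (fun B₂ : Finset X₂ => A₂ᶜ ⊆ B₂),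
          (-1 : ℝ) ^ ((B₁ \ A₁ᶜ).card + (B₂ \ A₂ᶜ).card) *
            (ρ₂ x₂ B₂ B₁ x₁ * ρ₁ x₁ B₁))
    (A₂ : Finset X₂) (x₂ : X₂) (hx₂ : x₂ ∈ A₂ᶜ)
    (A₁ : Finset X₁) (hA₁ : A₁.Nonempty) (hA₁' : A₁ ≠ Finset.univ) :
    ∑ x₁ ∈ A₁ᶜ, M x₁ A₁ x₂ A₂ = ∑ y₁ ∈ A₁, M y₁ (A₁.erase y₁) x₂ A₂ := by
  classical
  set F : Finset (Finset X₂) := Finset.univ.filter (fun B₂ : Finset X₂ => A₂ᶜ ⊆ B₂) with hF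
  set g : Finset X₁ → X₁ → ℝ := fun B₁ x₁ =>
    ∑ B₂ ∈ F, (-1 : ℝ) ^ (B₂ \ A₂ᶜ).card * (ρ₂ x₂ B₂ B₁ x₁ * ρ₁ x₁ B₁) with hg
  set T : Finset (Finset X₁) := Finset.univ.filter (fun B₁ : Finset X₁ => A₁ᶜ ⊆ B₁) with hT
  have hAc : (A₁ᶜ : Finset X₁).Nonempty := by
    rw [← Finset.card_pos, Finset.card_compl]
    have : A₁.card < Fintype.card X₁ := by
      refine lt_of_le_of_ne (Finset.card_le_univ A₁) ?_
      intro h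
      exact hA₁' (Finset.eq_univ_of_card _ h)
    omega
  -- rewrite M in terms of g
  have hMg : ∀ (x₁ : X₁) (C : Finset X₁), M x₁ C x₂ A₂ =
      ∑ B₁ ∈ Finset.univ.filter (fun B₁ : Finset X₁ => Cᶜ ⊆ B₁),
        (-1 : ℝ) ^ (B₁ \ Cᶜ).card * g B₁ x₁ := by
    intro x₁ C
    rw [hM]
    refine Finset.sum_congr rfl fun B₁ _ => ?_
    rw [hg]
    simp only [Finset.mul_sum]
    refine Finset.sum_congr rfl fun B₂ _ => ?_
    rw [pow_add]
    ring
  -- marginal consistency for g-sums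
  have hgsum : ∀ B₁ : Finset X₁, B₁.Nonempty →
      ∑ t ∈ B₁, g B₁ t = ∑ t ∈ A₁ᶜ, g A₁ᶜ t := by
    intro B₁ hB₁
    rw [hg]
    simp only
    rw [Finset.sum_comm, Finset.sum_comm (s := A₁ᶜ)]
    refine Finset.sum_congr rfl fun B₂ hB₂ => ?_
    rw [← Finset.mul_sum, ← Finset.mul_sum]
    congr 1
    have hx₂B₂ : x₂ ∈ B₂ := (Finset.mem_filter.mp hB₂).2 hx₂
    exact hMC x₂ B₂ hx₂B₂ B₁ A₁ᶜ hB₁ hAc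
  -- members of T are supersets of A₁ᶜ
  have hTsub : ∀ B₁ ∈ T, A₁ᶜ ⊆ B₁ := fun B₁ hB₁ => (Finset.mem_filter.mp hB₁).2
  -- the alternating sum over T vanishes
  have hzero : ∑ B₁ ∈ T, (-1 : ℝ) ^ (B₁ \ A₁ᶜ).card = 0 := by
    have h1 : ∑ B₁ ∈ T, (-1 : ℝ) ^ (B₁ \ A₁ᶜ).card
        = ∑ S ∈ A₁.powerset, (-1 : ℝ) ^ S.card := by
      refine Finset.sum_nbij' (fun B₁ => B₁ \ A₁ᶜ) (fun S => S ∪ A₁ᶜ) ?_ ?_ ?_ ?_ ?_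
      · intro B₁ hB₁
        rw [Finset.mem_powerset]
        intro a ha
        rw [Finset.mem_sdiff, Finset.mem_compl] at ha
        exact not_not.mp ha.2
      · intro S hS
        rw [hT, Finset.mem_filter]
        exact ⟨Finset.mem_univ _, Finset.subset_union_right⟩
      · intro B₁ hB₁
        exact Finset.sdiff_union_of_subset (hTsub B₁ hB₁)
      · intro S hS
        rw [Finset.mem_powerset] at hS
        ext a
        simp only [Finset.mem_sdiff, Finset.mem_union, Finset.mem_compl, not_not]
        constructor
        · rintro ⟨h1 | h2, h3⟩
          · exact h1
          · exact absurd h3 h2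
        · intro ha
          exact ⟨Or.inl ha, hS ha⟩
      · intro B₁ hB₁
        rfl
    rw [h1]
    have h2 := Finset.sum_powerset_neg_one_pow_card_of_nonempty (x := A₁) hA₁
    calc ∑ S ∈ A₁.powerset, (-1 : ℝ) ^ S.card
        = ((∑ S ∈ A₁.powerset, (-1 : ℤ) ^ S.card : ℤ) : ℝ) := by push_cast; rfl
      _ = 0 := by rw [h2]; simp
  -- LHS
  have hL : ∑ x₁ ∈ A₁ᶜ, M x₁ A₁ x₂ A₂
      = - ∑ B₁ ∈ T, (-1 : ℝ) ^ (B₁ \ A₁ᶜ).card * ∑ t ∈ B₁ \ A₁ᶜ, g B₁ t := by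
    have step1 : ∑ x₁ ∈ A₁ᶜ, M x₁ A₁ x₂ A₂
        = ∑ B₁ ∈ T, (-1 : ℝ) ^ (B₁ \ A₁ᶜ).card * ∑ t ∈ A₁ᶜ, g B₁ t := by
      simp_rw [hMg _ A₁, ← hT, Finset.mul_sum]
      exact Finset.sum_comm
    rw [step1]
    have step2 : ∀ B₁ ∈ T, (-1 : ℝ) ^ (B₁ \ A₁ᶜ).card * ∑ t ∈ A₁ᶜ, g B₁ t
        = (-1 : ℝ) ^ (B₁ \ A₁ᶜ).card * ∑ t ∈ A₁ᶜ, g A₁ᶜ t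
          - (-1 : ℝ) ^ (B₁ \ A₁ᶜ).card * ∑ t ∈ B₁ \ A₁ᶜ, g B₁ t := by
      intro B₁ hB₁
      have hsub := hTsub B₁ hB₁
      have hsd := Finset.sum_sdiff (f := g B₁) hsub
      have hBne : B₁.Nonempty := hAc.mono hsub
      rw [← mul_sub]
      congr 1
      rw [← hgsum B₁ hBne, ← hsd]
      ring
    rw [Finset.sum_congr rfl step2, Finset.sum_sub_distrib]
    simp_rw [← Finset.sum_mul]
    rw [hzero, zero_mul, zero_sub]
  rw [hL]
  -- RHS
  have hcompl : ∀ y ∈ A₁, (A₁.erase y)ᶜ = insert y A₁ᶜ := by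
    intro y hy
    ext a
    simp only [Finset.mem_compl, Finset.mem_erase, Finset.mem_insert, not_and, not_not]
    by_cases h : a = y <;> simp [h] <;> tauto
  have hR : ∀ y ∈ A₁, M y (A₁.erase y) x₂ A₂
      = ∑ B₁ ∈ T, (if y ∈ B₁ then -((-1 : ℝ) ^ (B₁ \ A₁ᶜ).card * g B₁ y) else 0) := by
    intro y hy
    rw [hMg y (A₁.erase y)]
    have hfilter : Finset.univ.filter (fun B₁ : Finset X₁ => (A₁.erase y)ᶜ ⊆ B₁)
        = T.filter (fun B₁ => y ∈ B₁) := by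
      rw [hT]
      ext B₁
      simp only [Finset.mem_filter, Finset.mem_univ, true_and, hcompl y hy,
        Finset.insert_subset_iff]
      tauto
    rw [hfilter, Finset.sum_filter]
    refine Finset.sum_congr rfl fun B₁ hB₁ => ?_
    split_ifs with hyB₁
    · have hyA : y ∉ A₁ᶜ := by simpa using hy
      have hysd : y ∈ B₁ \ A₁ᶜ := Finset.mem_sdiff.mpr ⟨hyB₁, hyA⟩
      have hcard : (B₁ \ (A₁.erase y)ᶜ).card + 1 = (B₁ \ A₁ᶜ).card := by
        rw [hcompl y hy]
        have : B₁ \ insert y A₁ᶜ = (B₁ \ A₁ᶜ).erase y := by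
          ext a
          simp [Finset.mem_sdiff, Finset.mem_erase, Finset.mem_insert]
          tauto
        rw [this, Finset.card_erase_of_mem hysd]
        have : 0 < (B₁ \ A₁ᶜ).card := Finset.card_pos.mpr ⟨y, hysd⟩
        omega
      have : (-1 : ℝ) ^ (B₁ \ A₁ᶜ).card
          = (-1 : ℝ) ^ (B₁ \ (A₁.erase y)ᶜ).card * (-1) := by
        rw [← hcard, pow_succ]
      rw [this]
      ring
    · rfl
  rw [Finset.sum_congr rfl hR, Finset.sum_comm]
  rw [neg_eq_iff_eq_neg, ← Finset.sum_neg_distrib]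
  refine Finset.sum_congr rfl fun B₁ hB₁ => ?_
  rw [← Finset.sum_filter]
  have hfil : A₁.filter (fun y => y ∈ B₁) = B₁ \ A₁ᶜ := by
    ext a
    simp only [Finset.mem_filter, Finset.mem_sdiff, Finset.mem_compl]
    tauto
  rw [hfil]
  simp [Finset.mul_sum]
end

section
/- (Proposition 3, forward direction) If μ ∈ Δ(P₁ × P₂) is a two-period SU representation of (ρ₁, {ρ₂(·|h)}), then for all t=1,2 and x_t ∈ A_t^C ≠ ∅, μ(E(x₁,A₁;x₂,A₂)) = M_{x₁,A₁;x₂,A₂}, where E(x₁,A₁;x₂,A₂) = {(≻₁,≻₂) : A_t ≻_t x_t ≻_t A_t^C\{x_t\} for t=1,2}. -/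
open Finset

lemma sandwich_sum {X : Type} [Fintype X] [DecidableEq X] (A S : Finset X) :
    (∑ B ∈ Finset.univ.filter (fun B : Finset X => A ⊆ B ∧ B ⊆ S),
      (-1 : ℝ) ^ (B \ A).card) = if S = A then 1 else 0 := by
  by_cases h : A ⊆ S
  · rw [Finset.sum_nbij' (fun B => B \ A) (fun T => A ∪ T)
      (t := (S \ A).powerset) (g := fun T => (-1 : ℝ) ^ T.card)]
    · have : (∑ T ∈ (S \ A).powerset, (-1 : ℝ) ^ T.card)
          = ((∑ T ∈ (S \ A).powerset, (-1 : ℤ) ^ T.card : ℤ) : ℝ) := by push_cast; ring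
      rw [this, Finset.sum_powerset_neg_one_pow_card]
      by_cases hSA : S = A
      · subst hSA
        norm_num
      · rw [if_neg, if_neg hSA]
        · simp
        · rw [Finset.sdiff_eq_empty_iff_subset]
          intro hsub
          exact hSA (le_antisymm hsub h)
    · intro B hB
      simp only [Finset.mem_filter, Finset.mem_univ, true_and] at hB
      simp only [Finset.mem_powerset]
      exact Finset.sdiff_subset_sdiff hB.2 le_rfl
    · intro T hT
      simp only [Finset.mem_powerset] at hT
      simp only [Finset.mem_filter, Finset.mem_univ, true_and]
      exact ⟨Finset.subset_union_left,
        Finset.union_subset h (hT.trans Finset.sdiff_subset)⟩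
    · intro B hB
      simp only [Finset.mem_filter, Finset.mem_univ, true_and] at hB
      exact Finset.union_sdiff_of_subset hB.1
    · intro T hT
      simp only [Finset.mem_powerset] at hT
      exact Finset.union_sdiff_cancel_left
        (Finset.disjoint_left.2 fun a ha haT => (Finset.mem_sdiff.1 (hT haT)).2 ha)
    · intro B _; rfl
  · rw [Finset.filter_false_of_mem, Finset.sum_empty, if_neg]
    · intro hSA; exact h (hSA ▸ le_rfl)
    · intro B _ hB
      exact h (hB.1.trans hB.2)

lemma coord_sum {X : Type} [Fintype X] [DecidableEq X] (r : Pref X) (A : Finset X) (x : X)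
    (hx : x ∈ Aᶜ) :
    (∑ B ∈ Finset.univ.filter (fun B : Finset X => Aᶜ ⊆ B),
      (-1 : ℝ) ^ (B \ Aᶜ).card * (if ∀ y ∈ B, y ≠ x → r.1 x y then (1:ℝ) else 0)) =
    if (∀ a ∈ A, r.1 a x) ∧ (∀ z ∈ Aᶜ, z ≠ x → r.1 x z) then 1 else 0 := by
  classical
  set S : Finset X := insert x (Finset.univ.filter (fun y => r.1 x y)) with hS
  have hcond : ∀ B : Finset X, (∀ y ∈ B, y ≠ x → r.1 x y) ↔ B ⊆ S := by
    intro B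
    constructor
    · intro hB y hy
      by_cases hyx : y = x
      · simp [hS, hyx]
      · simp only [hS, Finset.mem_insert, Finset.mem_filter, Finset.mem_univ, true_and]
        exact Or.inr (hB y hy hyx)
    · intro hB y hy hyx
      have := hB hy
      simp only [hS, Finset.mem_insert, Finset.mem_filter, Finset.mem_univ, true_and] at this
      exact this.resolve_left hyx
  have step1 : (∑ B ∈ Finset.univ.filter (fun B : Finset X => Aᶜ ⊆ B),
      (-1 : ℝ) ^ (B \ Aᶜ).card * (if ∀ y ∈ B, y ≠ x → r.1 x y then (1:ℝ) else 0)) =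
      ∑ B ∈ Finset.univ.filter (fun B : Finset X => Aᶜ ⊆ B ∧ B ⊆ S),
      (-1 : ℝ) ^ (B \ Aᶜ).card := by
    simp only [hcond, mul_ite, mul_one, mul_zero]
    rw [← Finset.sum_filter, Finset.filter_filter]
  rw [step1, sandwich_sum]
  have hiff : S = Aᶜ ↔ ((∀ a ∈ A, r.1 a x) ∧ (∀ z ∈ Aᶜ, z ≠ x → r.1 x z)) := by
    constructor
    · intro h
      constructor
      · intro a ha
        have haA : a ∉ Aᶜ := by simp [ha]
        have haS : a ∉ S := h ▸ haA
        simp only [hS, Finset.mem_insert, Finset.mem_filter, Finset.mem_univ, true_and,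
          not_or] at haS
        rcases r.2.2.2 x a (Ne.symm haS.1) with hr | hr
        · exact absurd hr (by simpa using haS.2)
        · exact hr
      · intro z hz hzx
        have hzS : z ∈ S := h ▸ hz
        simp only [hS, Finset.mem_insert, Finset.mem_filter, Finset.mem_univ, true_and] at hzS
        exact hzS.resolve_left hzx
    · rintro ⟨h1, h2⟩
      ext y
      simp only [hS, Finset.mem_insert, Finset.mem_filter, Finset.mem_univ, true_and]
      constructor
      · rintro (rfl | hr)
        · exact hx
        · by_contra hy
          simp only [Finset.mem_compl, not_not] at hy
          exact r.2.2.1 x y hr (h1 y hy)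
      · intro hy
        by_cases hyx : y = x
        · exact Or.inl hyx
        · exact Or.inr (h2 y hy hyx)
  rw [if_congr hiff rfl rfl]

theorem stmt11 (X₁ X₂ : Type) [Fintype X₁] [DecidableEq X₁] [Fintype X₂] [DecidableEq X₂]
    (μ : Pref X₁ × Pref X₂ → ℝ) (hμ0 : ∀ q, 0 ≤ μ q) (hμ1 : ∑ q, μ q = 1)
    (ρ₁ : X₁ → Finset X₁ → ℝ) (ρ₂ : X₂ → Finset X₂ → Finset X₁ → X₁ → ℝ)
    (hrep₁ : ∀ A₁ : Finset X₁, A₁.Nonempty → ∀ x₁ ∈ A₁,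
      ρ₁ x₁ A₁ = ∑ q ∈ Finset.univ.filter
        (fun q : Pref X₁ × Pref X₂ => ∀ y ∈ A₁, y ≠ x₁ → q.1.1 x₁ y), μ q)
    (hrep₂ : ∀ A₂ : Finset X₂, A₂.Nonempty → ∀ x₂ ∈ A₂,
      ∀ A₁ : Finset X₁, A₁.Nonempty → ∀ x₁ ∈ A₁,
      ρ₂ x₂ A₂ A₁ x₁ * ρ₁ x₁ A₁ = ∑ q ∈ Finset.univ.filter
        (fun q : Pref X₁ × Pref X₂ =>
          (∀ y ∈ A₁, y ≠ x₁ → q.1.1 x₁ y) ∧ (∀ y ∈ A₂, y ≠ x₂ → q.2.1 x₂ y)), μ q)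
    (A₁ : Finset X₁) (A₂ : Finset X₂) (x₁ : X₁) (x₂ : X₂)
    (hx₁ : x₁ ∈ A₁ᶜ) (hx₂ : x₂ ∈ A₂ᶜ) :
    (∑ q ∈ Finset.univ.filter (fun q : Pref X₁ × Pref X₂ =>
        ((∀ a ∈ A₁, q.1.1 a x₁) ∧ ∀ z ∈ A₁ᶜ, z ≠ x₁ → q.1.1 x₁ z) ∧
        ((∀ a ∈ A₂, q.2.1 a x₂) ∧ ∀ z ∈ A₂ᶜ, z ≠ x₂ → q.2.1 x₂ z)), μ q) =
      ∑ B₁ ∈ Finset.univ.filter (fun B₁ : Finset X₁ => A₁ᶜ ⊆ B₁),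
        ∑ B₂ ∈ Finset.univ.filter (fun B₂ : Finset X₂ => A₂ᶜ ⊆ B₂),
          (-1 : ℝ) ^ ((B₁ \ A₁ᶜ).card + (B₂ \ A₂ᶜ).card) *
            (ρ₂ x₂ B₂ B₁ x₁ * ρ₁ x₁ B₁) := by
  classical
  -- rewrite RHS using the representation
  have hRHS : ∀ B₁ ∈ Finset.univ.filter (fun B₁ : Finset X₁ => A₁ᶜ ⊆ B₁),
      ∀ B₂ ∈ Finset.univ.filter (fun B₂ : Finset X₂ => A₂ᶜ ⊆ B₂),
      ρ₂ x₂ B₂ B₁ x₁ * ρ₁ x₁ B₁ = ∑ q ∈ Finset.univ.filter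
        (fun q : Pref X₁ × Pref X₂ =>
          (∀ y ∈ B₁, y ≠ x₁ → q.1.1 x₁ y) ∧ (∀ y ∈ B₂, y ≠ x₂ → q.2.1 x₂ y)), μ q := by
    intro B₁ hB₁ B₂ hB₂
    simp only [Finset.mem_filter, Finset.mem_univ, true_and] at hB₁ hB₂
    exact hrep₂ B₂ ⟨x₂, hB₂ hx₂⟩ x₂ (hB₂ hx₂) B₁ ⟨x₁, hB₁ hx₁⟩ x₁ (hB₁ hx₁)
  rw [Finset.sum_congr rfl (fun B₁ hB₁ => Finset.sum_congr rfl (fun B₂ hB₂ => by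
    rw [hRHS B₁ hB₁ B₂ hB₂]))]
  -- turn inner μ-sums into sums over all q with indicators
  have key : ∀ q : Pref X₁ × Pref X₂,
      (if ((∀ a ∈ A₁, q.1.1 a x₁) ∧ ∀ z ∈ A₁ᶜ, z ≠ x₁ → q.1.1 x₁ z) ∧
        ((∀ a ∈ A₂, q.2.1 a x₂) ∧ ∀ z ∈ A₂ᶜ, z ≠ x₂ → q.2.1 x₂ z) then μ q else 0)
      = ∑ B₁ ∈ Finset.univ.filter (fun B₁ : Finset X₁ => A₁ᶜ ⊆ B₁),
        ∑ B₂ ∈ Finset.univ.filter (fun B₂ : Finset X₂ => A₂ᶜ ⊆ B₂),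
          (-1 : ℝ) ^ ((B₁ \ A₁ᶜ).card + (B₂ \ A₂ᶜ).card) *
            (if (∀ y ∈ B₁, y ≠ x₁ → q.1.1 x₁ y) ∧ (∀ y ∈ B₂, y ≠ x₂ → q.2.1 x₂ y)
              then μ q else 0) := by
    intro q
    have expand : ∀ B₁ : Finset X₁, ∀ B₂ : Finset X₂,
        (-1 : ℝ) ^ ((B₁ \ A₁ᶜ).card + (B₂ \ A₂ᶜ).card) *
            (if (∀ y ∈ B₁, y ≠ x₁ → q.1.1 x₁ y) ∧ (∀ y ∈ B₂, y ≠ x₂ → q.2.1 x₂ y)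
              then μ q else 0)
        = μ q * (((-1 : ℝ) ^ (B₁ \ A₁ᶜ).card *
            (if ∀ y ∈ B₁, y ≠ x₁ → q.1.1 x₁ y then (1:ℝ) else 0)) *
          ((-1 : ℝ) ^ (B₂ \ A₂ᶜ).card *
            (if ∀ y ∈ B₂, y ≠ x₂ → q.2.1 x₂ y then (1:ℝ) else 0))) := by
      intro B₁ B₂
      rw [pow_add]
      by_cases h1 : ∀ y ∈ B₁, y ≠ x₁ → q.1.1 x₁ y
      · by_cases h2 : ∀ y ∈ B₂, y ≠ x₂ → q.2.1 x₂ y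
        · rw [if_pos ⟨h1, h2⟩, if_pos h1, if_pos h2]; ring
        · rw [if_neg (fun h => h2 h.2), if_pos h1, if_neg h2]; ring
      · rw [if_neg (fun h => h1 h.1), if_neg h1]; ring
    simp only [expand]
    simp only [← Finset.mul_sum]
    rw [← Finset.sum_mul]
    rw [coord_sum q.1 A₁ x₁ hx₁, coord_sum q.2 A₂ x₂ hx₂]
    by_cases h1 : (∀ a ∈ A₁, q.1.1 a x₁) ∧ ∀ z ∈ A₁ᶜ, z ≠ x₁ → q.1.1 x₁ z
    · by_cases h2 : (∀ a ∈ A₂, q.2.1 a x₂) ∧ ∀ z ∈ A₂ᶜ, z ≠ x₂ → q.2.1 x₂ z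
      · rw [if_pos h1, if_pos h2, if_pos (⟨h1, h2⟩ : _ ∧ _)]; ring
      · rw [if_neg h2, if_neg (fun h => h2 h.2)]; ring
    · rw [if_neg h1, if_neg (fun h => h1 h.1)]; ring
  rw [Finset.sum_filter, Finset.sum_congr rfl (fun q _ => key q)]
  rw [Finset.sum_comm]
  refine Finset.sum_congr rfl (fun B₁ _ => ?_)
  rw [Finset.sum_comm]
  refine Finset.sum_congr rfl (fun B₂ _ => ?_)
  rw [← Finset.mul_sum, Finset.sum_filter]
end

section
/- (Proposition 3, backward direction) Suppose μ ∈ Δ(P₁ × P₂) satisfies μ(E(x₁,A₁;x₂,A₂)) = M_{x₁,A₁;x₂,A₂} for all t=1,2 and x_t ∈ A_t^C ≠ ∅. Then for all y_t ∈ D_t ⊆ X_t nonempty: μ(C(y₁,D₁) ∩ C(y₂,D₂)) = ρ₂(y₂,D₂|D₁,y₁)·ρ₁(y₁,D₁), and in particular μ(C(y₁,D₁)) = ρ₁(y₁,D₁). -/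
open Finset

lemma neg_one_powerset {X : Type} [DecidableEq X] (s : Finset X) :
    ∑ m ∈ s.powerset, (-1:ℝ)^m.card = if s = ∅ then 1 else 0 := by
  have h := Finset.sum_powerset_neg_one_pow_card (x := s)
  have h2 : ((∑ m ∈ s.powerset, (-1:ℤ)^m.card : ℤ) : ℝ)
      = ∑ m ∈ s.powerset, (-1:ℝ)^m.card := by push_cast; rfl
  rw [← h2, h]
  split <;> simp

lemma inner_sign {X : Type} [Fintype X] [DecidableEq X] (D C : Finset X) (hDC : D ⊆ C) :
    ∑ B ∈ univ.filter (fun B => D ⊆ B ∧ B ⊆ C), (-1:ℝ)^(C \ B).card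
      = if C = D then 1 else 0 := by
  have key : ∑ B ∈ univ.filter (fun B => D ⊆ B ∧ B ⊆ C), (-1:ℝ)^(C \ B).card
      = ∑ m ∈ (C \ D).powerset, (-1:ℝ)^m.card := by
    refine Finset.sum_nbij' (fun B => C \ B) (fun T => C \ T) ?_ ?_ ?_ ?_ ?_
    · intro B hB
      simp only [mem_filter, mem_univ, true_and] at hB
      exact mem_powerset.2 (sdiff_subset_sdiff subset_rfl hB.1)
    · intro T hT
      simp only [mem_powerset] at hT
      simp only [mem_filter, mem_univ, true_and]
      constructor
      · intro d hd
        have hdC : d ∈ C := hDC hd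
        have hdT : d ∉ T := fun h => (mem_sdiff.1 (hT h)).2 hd
        exact mem_sdiff.2 ⟨hdC, hdT⟩
      · exact sdiff_subset
    · intro B hB
      simp only [mem_filter, mem_univ, true_and] at hB
      exact Finset.sdiff_sdiff_eq_self hB.2
    · intro T hT
      simp only [mem_powerset] at hT
      exact Finset.sdiff_sdiff_eq_self (hT.trans sdiff_subset)
    · intro B _; rfl
  rw [key, neg_one_powerset]
  congr 1
  rw [eq_iff_iff, sdiff_eq_empty_iff_subset]
  exact ⟨fun h => subset_antisymm h hDC, fun h => h ▸ Finset.Subset.refl C⟩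

lemma moeb {X : Type} [Fintype X] [DecidableEq X] (D : Finset X) (h : Finset X → ℝ) :
    (∑ B ∈ univ.filter (fun B => D ⊆ B), ∑ C ∈ univ.filter (fun C => B ⊆ C),
      (-1:ℝ)^(C \ B).card * h C) = h D := by
  rw [Finset.sum_comm' (t' := univ.filter (fun C => D ⊆ C))
      (s' := fun C => univ.filter (fun B => D ⊆ B ∧ B ⊆ C))
      (fun B C => by
        simp only [mem_filter, mem_univ, true_and]
        exact ⟨fun ⟨h1, h2⟩ => ⟨⟨h1, h2⟩, h1.trans h2⟩, fun ⟨⟨h1, h2⟩, _⟩ => ⟨h1, h2⟩⟩)]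
  have step : ∀ C ∈ univ.filter (fun C => D ⊆ C),
      (∑ B ∈ univ.filter (fun B => D ⊆ B ∧ B ⊆ C), (-1:ℝ)^(C \ B).card * h C)
        = (if C = D then 1 else 0) * h C := by
    intro C hC
    simp only [mem_filter, mem_univ, true_and] at hC
    rw [← Finset.sum_mul, inner_sign D C hC]
  rw [Finset.sum_congr rfl step]
  rw [Finset.sum_eq_single_of_mem D (by simp)]
  · simp
  · intro C _ hCD
    simp [hCD]

/-- The event predicate of `hE` is equivalent to pinning down the strict upper contour set. -/
lemma epred_iff {X : Type} [Fintype X] [DecidableEq X] (r : Pref X) (x : X) (A : Finset X) :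
    ((∀ a ∈ A, r.1 a x) ∧ ∀ z ∈ Aᶜ, z ≠ x → r.1 x z) ↔
      univ.filter (fun a => r.1 a x) = A := by
  obtain ⟨r, htr, has, hto⟩ := r
  simp only
  constructor
  · rintro ⟨h1, h2⟩
    ext a
    simp only [mem_filter, mem_univ, true_and]
    constructor
    · intro ha
      by_contra hA
      have hax : a ≠ x := by
        rintro rfl; exact has _ _ ha ha
      have := h2 a (mem_compl.2 hA) hax
      exact has _ _ ha this
    · exact h1 a
  · rintro rfl
    refine ⟨fun a ha => (mem_filter.mp ha).2, fun z hz hzx => ?_⟩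
    have hz' : ¬ r z x := by simpa using hz
    rcases hto x z (Ne.symm hzx) with h | h
    · exact h
    · exact absurd h hz'

theorem stmt12 (X₁ X₂ : Type) [Fintype X₁] [DecidableEq X₁] [Fintype X₂] [DecidableEq X₂]
    [Nonempty X₂]
    (μ : Pref X₁ × Pref X₂ → ℝ) (hμ0 : ∀ q, 0 ≤ μ q) (hμ1 : ∑ q, μ q = 1)
    (ρ₁ : X₁ → Finset X₁ → ℝ)
    (hρ₁sum : ∀ B₁ : Finset X₁, B₁.Nonempty → ∑ x ∈ B₁, ρ₁ x B₁ = 1)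
    (hρ₁supp : ∀ (B₁ : Finset X₁) (x : X₁), x ∉ B₁ → ρ₁ x B₁ = 0)
    (hρ₁nn : ∀ B₁ x, 0 ≤ ρ₁ x B₁)
    (ρ₂ : X₂ → Finset X₂ → Finset X₁ → X₁ → ℝ)
    (hρ₂sum : ∀ (B₁ : Finset X₁) (x₁ : X₁), x₁ ∈ B₁ → 0 < ρ₁ x₁ B₁ →
      ∀ B₂ : Finset X₂, B₂.Nonempty → ∑ y ∈ B₂, ρ₂ y B₂ B₁ x₁ = 1)
    (hρ₂supp : ∀ (B₁ : Finset X₁) (x₁ : X₁), x₁ ∈ B₁ → 0 < ρ₁ x₁ B₁ →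
      ∀ (B₂ : Finset X₂) (y : X₂), y ∉ B₂ → ρ₂ y B₂ B₁ x₁ = 0)
    (hE : ∀ (A₁ : Finset X₁) (A₂ : Finset X₂) (x₁ : X₁) (x₂ : X₂),
      x₁ ∈ A₁ᶜ → x₂ ∈ A₂ᶜ →
      (∑ q ∈ Finset.univ.filter (fun q : Pref X₁ × Pref X₂ =>
        ((∀ a ∈ A₁, q.1.1 a x₁) ∧ ∀ z ∈ A₁ᶜ, z ≠ x₁ → q.1.1 x₁ z) ∧
        ((∀ a ∈ A₂, q.2.1 a x₂) ∧ ∀ z ∈ A₂ᶜ, z ≠ x₂ → q.2.1 x₂ z)), μ q) =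
      ∑ B₁ ∈ Finset.univ.filter (fun B₁ : Finset X₁ => A₁ᶜ ⊆ B₁),
        ∑ B₂ ∈ Finset.univ.filter (fun B₂ : Finset X₂ => A₂ᶜ ⊆ B₂),
          (-1 : ℝ) ^ ((B₁ \ A₁ᶜ).card + (B₂ \ A₂ᶜ).card) *
            (ρ₂ x₂ B₂ B₁ x₁ * ρ₁ x₁ B₁))
    (D₁ : Finset X₁) (D₂ : Finset X₂) (y₁ : X₁) (y₂ : X₂)
    (hy₁ : y₁ ∈ D₁) (hy₂ : y₂ ∈ D₂) :
    (∑ q ∈ Finset.univ.filter (fun q : Pref X₁ × Pref X₂ =>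
        (∀ y ∈ D₁, y ≠ y₁ → q.1.1 y₁ y) ∧ (∀ y ∈ D₂, y ≠ y₂ → q.2.1 y₂ y)), μ q) =
      ρ₂ y₂ D₂ D₁ y₁ * ρ₁ y₁ D₁ ∧
    (∑ q ∈ Finset.univ.filter (fun q : Pref X₁ × Pref X₂ =>
        ∀ y ∈ D₁, y ≠ y₁ → q.1.1 y₁ y), μ q) = ρ₁ y₁ D₁ := by
  have key : ∀ (E₂ : Finset X₂) (z₂ : X₂), z₂ ∈ E₂ →
      (∑ q ∈ Finset.univ.filter (fun q : Pref X₁ × Pref X₂ =>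
          (∀ y ∈ D₁, y ≠ y₁ → q.1.1 y₁ y) ∧ (∀ y ∈ E₂, y ≠ z₂ → q.2.1 z₂ y)), μ q)
        = ρ₂ z₂ E₂ D₁ y₁ * ρ₁ y₁ D₁ := by
    intro E₂ z₂ hz₂
    classical
    set S : Finset (Pref X₁ × Pref X₂) := Finset.univ.filter (fun q : Pref X₁ × Pref X₂ =>
        (∀ y ∈ D₁, y ≠ y₁ → q.1.1 y₁ y) ∧ (∀ y ∈ E₂, y ≠ z₂ → q.2.1 z₂ y)) with hS
    set f : Pref X₁ × Pref X₂ → Finset X₁ × Finset X₂ :=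
      fun q => ((univ.filter (fun a => q.1.1 a y₁))ᶜ, (univ.filter (fun a => q.2.1 a z₂))ᶜ)
      with hf
    set T : Finset (Finset X₁ × Finset X₂) :=
      Finset.univ.filter (fun p => D₁ ⊆ p.1 ∧ E₂ ⊆ p.2) with hT
    -- characterization of fibers
    have fiber_eq : ∀ p ∈ T, S.filter (fun q => f q = p) =
        Finset.univ.filter (fun q : Pref X₁ × Pref X₂ =>
          ((∀ a ∈ p.1ᶜ, q.1.1 a y₁) ∧ ∀ z ∈ p.1ᶜᶜ, z ≠ y₁ → q.1.1 y₁ z) ∧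
          ((∀ a ∈ p.2ᶜ, q.2.1 a z₂) ∧ ∀ z ∈ p.2ᶜᶜ, z ≠ z₂ → q.2.1 z₂ z)) := by
      intro p hp
      simp only [hT, mem_filter, mem_univ, true_and] at hp
      ext q
      simp only [hS, hf, mem_filter, mem_univ, true_and]
      have h1 := epred_iff q.1 y₁ p.1ᶜ
      have h2 := epred_iff q.2 z₂ p.2ᶜ
      rw [compl_compl] at h1 h2
      constructor
      · rintro ⟨_, hfq⟩
        have e1 : univ.filter (fun a => q.1.1 a y₁) = p.1ᶜ := by
          have := congrArg Prod.fst hfq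
          simp only at this
          rw [← this, compl_compl]
        have e2 : univ.filter (fun a => q.2.1 a z₂) = p.2ᶜ := by
          have := congrArg Prod.snd hfq
          simp only at this
          rw [← this, compl_compl]
        simp only [compl_compl]
        exact ⟨h1.mpr e1, h2.mpr e2⟩
      · rintro ⟨hq1, hq2⟩
        rw [compl_compl] at hq1 hq2
        have e1 : univ.filter (fun a => q.1.1 a y₁) = p.1ᶜ := h1.mp hq1
        have e2 : univ.filter (fun a => q.2.1 a z₂) = p.2ᶜ := h2.mp hq2
        refine ⟨⟨fun y hy hyne => hq1.2 y (hp.1 hy) hyne, fun y hy hyne => hq2.2 y (hp.2 hy) hyne⟩, ?_⟩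
        rw [Prod.ext_iff]
        exact ⟨by simp only; rw [e1, compl_compl], by simp only; rw [e2, compl_compl]⟩
    -- the fiber map lands in T
    have hmaps : ∀ q ∈ S, f q ∈ T := by
      intro q hq
      simp only [hS, mem_filter, mem_univ, true_and] at hq
      simp only [hT, hf, mem_filter, mem_univ, true_and]
      have has₁ := q.1.2.2.1
      have has₂ := q.2.2.2.1
      constructor
      · intro d hd
        simp only [mem_compl, mem_filter, mem_univ, true_and]
        rcases eq_or_ne d y₁ with rfl | hne
        · intro h; exact has₁ _ _ h h
        · intro h; exact has₁ _ _ h (hq.1 d hd hne)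
      · intro d hd
        simp only [mem_compl, mem_filter, mem_univ, true_and]
        rcases eq_or_ne d z₂ with rfl | hne
        · intro h; exact has₂ _ _ h h
        · intro h; exact has₂ _ _ h (hq.2 d hd hne)
    have split := Finset.sum_fiberwise_of_maps_to hmaps μ
    rw [← split]
    have stepE : ∀ p ∈ T, (∑ q ∈ S.filter (fun q => f q = p), μ q)
        = ∑ C₁ ∈ Finset.univ.filter (fun C₁ : Finset X₁ => p.1 ⊆ C₁),
            ∑ C₂ ∈ Finset.univ.filter (fun C₂ : Finset X₂ => p.2 ⊆ C₂),
              (-1 : ℝ) ^ ((C₁ \ p.1).card + (C₂ \ p.2).card) *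
                (ρ₂ z₂ C₂ C₁ y₁ * ρ₁ y₁ C₁) := by
      intro p hp
      have hpT := hp
      simp only [hT, mem_filter, mem_univ, true_and] at hpT
      rw [fiber_eq p hp]
      have hy₁p : y₁ ∈ p.1ᶜᶜ := by rw [compl_compl]; exact hpT.1 hy₁
      have hz₂p : z₂ ∈ p.2ᶜᶜ := by rw [compl_compl]; exact hpT.2 hz₂
      have := hE p.1ᶜ p.2ᶜ y₁ z₂ hy₁p hz₂p
      rw [this]
      simp only [compl_compl]
    rw [Finset.sum_congr rfl stepE]
    -- now reorganize: T = product of two filters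
    have hTprod : T = (univ.filter (fun B₁ : Finset X₁ => D₁ ⊆ B₁)) ×ˢ
        (univ.filter (fun B₂ : Finset X₂ => E₂ ⊆ B₂)) := by
      rw [hT, ← Finset.filter_product, Finset.univ_product_univ]
    rw [hTprod, Finset.sum_product]
    -- now we have a quadruple sum; apply Möbius twice
    have inner_step : ∀ B₁ : Finset X₁,
        (∑ B₂ ∈ univ.filter (fun B₂ : Finset X₂ => E₂ ⊆ B₂),
          ∑ C₁ ∈ univ.filter (fun C₁ : Finset X₁ => B₁ ⊆ C₁),
            ∑ C₂ ∈ univ.filter (fun C₂ : Finset X₂ => B₂ ⊆ C₂),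
              (-1 : ℝ) ^ ((C₁ \ B₁).card + (C₂ \ B₂).card) *
                (ρ₂ z₂ C₂ C₁ y₁ * ρ₁ y₁ C₁))
        = ∑ C₁ ∈ univ.filter (fun C₁ : Finset X₁ => B₁ ⊆ C₁),
            (-1 : ℝ) ^ (C₁ \ B₁).card * (ρ₂ z₂ E₂ C₁ y₁ * ρ₁ y₁ C₁) := by
      intro B₁
      rw [Finset.sum_comm]
      refine Finset.sum_congr rfl fun C₁ _ => ?_
      have rearr : ∀ B₂ ∈ univ.filter (fun B₂ : Finset X₂ => E₂ ⊆ B₂),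
          (∑ C₂ ∈ univ.filter (fun C₂ : Finset X₂ => B₂ ⊆ C₂),
            (-1 : ℝ) ^ ((C₁ \ B₁).card + (C₂ \ B₂).card) *
              (ρ₂ z₂ C₂ C₁ y₁ * ρ₁ y₁ C₁))
          = (-1 : ℝ) ^ (C₁ \ B₁).card *
            ∑ C₂ ∈ univ.filter (fun C₂ : Finset X₂ => B₂ ⊆ C₂),
              (-1 : ℝ) ^ (C₂ \ B₂).card * (ρ₂ z₂ C₂ C₁ y₁ * ρ₁ y₁ C₁) := by
        intro B₂ _
        rw [Finset.mul_sum]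
        refine Finset.sum_congr rfl fun C₂ _ => ?_
        rw [pow_add]; ring
      rw [Finset.sum_congr rfl rearr, ← Finset.mul_sum,
        moeb E₂ (fun C₂ => ρ₂ z₂ C₂ C₁ y₁ * ρ₁ y₁ C₁)]
    rw [Finset.sum_congr rfl (fun B₁ _ => inner_step B₁)]
    exact moeb D₁ (fun C₁ => ρ₂ z₂ E₂ C₁ y₁ * ρ₁ y₁ C₁)
  refine ⟨key D₂ y₂ hy₂, ?_⟩
  have k2 := key {y₂} y₂ (mem_singleton_self y₂)
  have hfilt : Finset.univ.filter (fun q : Pref X₁ × Pref X₂ =>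
        (∀ y ∈ D₁, y ≠ y₁ → q.1.1 y₁ y) ∧ (∀ y ∈ ({y₂} : Finset X₂), y ≠ y₂ → q.2.1 y₂ y))
      = Finset.univ.filter (fun q : Pref X₁ × Pref X₂ => ∀ y ∈ D₁, y ≠ y₁ → q.1.1 y₁ y) := by
    apply Finset.filter_congr
    intro q _
    simp only [mem_singleton, and_iff_left_iff_imp]
    rintro _ y rfl h
    exact absurd rfl h
  rw [hfilt] at k2
  rw [k2]
  rcases eq_or_lt_of_le (hρ₁nn D₁ y₁) with h0 | hpos
  · rw [← h0, mul_zero]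
  · rw [show ρ₂ y₂ {y₂} D₁ y₁ = 1 from by
      have := hρ₂sum D₁ y₁ hy₁ hpos {y₂} ⟨y₂, mem_singleton_self y₂⟩
      simpa using this, one_mul]
end

section
/- (Necessity of stochastic regularity) If μ ∈ Δ(P₁ × P₂) is a SU representation of (ρ₁,ρ₂), then for each t=1,2 and x_t ∈ A_t ⊆ B_t: ρ₁(x₁,A₁)·(ρ₂(x₂,A₂|A₁,x₁) − ρ₂(x₂,B₂|A₁,x₁)) ≥ ρ₁(x₁,B₁)·(ρ₂(x₂,A₂|B₁,x₁) − ρ₂(x₂,B₂|B₁,x₁)). -/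
open Finset

theorem stmt14 (X₁ X₂ : Type) [Fintype X₁] [DecidableEq X₁] [Fintype X₂] [DecidableEq X₂]
    (μ : Pref X₁ × Pref X₂ → ℝ) (hμ0 : ∀ q, 0 ≤ μ q) (hμ1 : ∑ q, μ q = 1)
    (ρ₁ : X₁ → Finset X₁ → ℝ) (ρ₂ : X₂ → Finset X₂ → Finset X₁ → X₁ → ℝ)
    (hrep₁ : ∀ D₁ : Finset X₁, D₁.Nonempty → ∀ x₁ ∈ D₁,
      ρ₁ x₁ D₁ = ∑ q ∈ Finset.univ.filter
        (fun q : Pref X₁ × Pref X₂ => ∀ y ∈ D₁, y ≠ x₁ → q.1.1 x₁ y), μ q)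
    (hrep₂ : ∀ D₂ : Finset X₂, D₂.Nonempty → ∀ x₂ ∈ D₂,
      ∀ D₁ : Finset X₁, D₁.Nonempty → ∀ x₁ ∈ D₁,
      ρ₂ x₂ D₂ D₁ x₁ * ρ₁ x₁ D₁ = ∑ q ∈ Finset.univ.filter
        (fun q : Pref X₁ × Pref X₂ =>
          (∀ y ∈ D₁, y ≠ x₁ → q.1.1 x₁ y) ∧ (∀ y ∈ D₂, y ≠ x₂ → q.2.1 x₂ y)), μ q)
    (x₁ : X₁) (A₁ B₁ : Finset X₁) (hx₁ : x₁ ∈ A₁) (hAB₁ : A₁ ⊆ B₁)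
    (x₂ : X₂) (A₂ B₂ : Finset X₂) (hx₂ : x₂ ∈ A₂) (hAB₂ : A₂ ⊆ B₂) :
    ρ₁ x₁ B₁ * (ρ₂ x₂ A₂ B₁ x₁ - ρ₂ x₂ B₂ B₁ x₁) ≤
      ρ₁ x₁ A₁ * (ρ₂ x₂ A₂ A₁ x₁ - ρ₂ x₂ B₂ A₁ x₁) := by
  classical
  have hA₁ : A₁.Nonempty := ⟨x₁, hx₁⟩
  have hB₁ : B₁.Nonempty := ⟨x₁, hAB₁ hx₁⟩
  have hA₂ : A₂.Nonempty := ⟨x₂, hx₂⟩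
  have hB₂ : B₂.Nonempty := ⟨x₂, hAB₂ hx₂⟩
  have hx₁B : x₁ ∈ B₁ := hAB₁ hx₁
  have hx₂B : x₂ ∈ B₂ := hAB₂ hx₂
  have e1 := hrep₂ A₂ hA₂ x₂ hx₂ A₁ hA₁ x₁ hx₁
  have e2 := hrep₂ B₂ hB₂ x₂ hx₂B A₁ hA₁ x₁ hx₁
  have e3 := hrep₂ A₂ hA₂ x₂ hx₂ B₁ hB₁ x₁ hx₁B
  have e4 := hrep₂ B₂ hB₂ x₂ hx₂B B₁ hB₁ x₁ hx₁B
  have key : ∀ (D₁ : Finset X₁), ∀ (D₂ E₂ : Finset X₂), D₂ ⊆ E₂ →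
      (Finset.univ.filter (fun q : Pref X₁ × Pref X₂ =>
          (∀ y ∈ D₁, y ≠ x₁ → q.1.1 x₁ y) ∧ (∀ y ∈ E₂, y ≠ x₂ → q.2.1 x₂ y)))
        ⊆ (Finset.univ.filter (fun q : Pref X₁ × Pref X₂ =>
          (∀ y ∈ D₁, y ≠ x₁ → q.1.1 x₁ y) ∧ (∀ y ∈ D₂, y ≠ x₂ → q.2.1 x₂ y))) := by
    intro D₁ D₂ E₂ hDE q hq
    simp only [Finset.mem_filter, Finset.mem_univ, true_and] at hq ⊢
    exact ⟨hq.1, fun y hy => hq.2 y (hDE hy)⟩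
  have h24 : (Finset.univ.filter (fun q : Pref X₁ × Pref X₂ =>
          (∀ y ∈ A₁, y ≠ x₁ → q.1.1 x₁ y) ∧ (∀ y ∈ B₂, y ≠ x₂ → q.2.1 x₂ y)))
        ⊆ (Finset.univ.filter (fun q : Pref X₁ × Pref X₂ =>
          (∀ y ∈ A₁, y ≠ x₁ → q.1.1 x₁ y) ∧ (∀ y ∈ A₂, y ≠ x₂ → q.2.1 x₂ y))) :=
    key A₁ A₂ B₂ hAB₂
  have h13 : (Finset.univ.filter (fun q : Pref X₁ × Pref X₂ =>
          (∀ y ∈ B₁, y ≠ x₁ → q.1.1 x₁ y) ∧ (∀ y ∈ B₂, y ≠ x₂ → q.2.1 x₂ y)))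
        ⊆ (Finset.univ.filter (fun q : Pref X₁ × Pref X₂ =>
          (∀ y ∈ B₁, y ≠ x₁ → q.1.1 x₁ y) ∧ (∀ y ∈ A₂, y ≠ x₂ → q.2.1 x₂ y))) :=
    key B₁ A₂ B₂ hAB₂
  have lhs_eq : ρ₁ x₁ B₁ * (ρ₂ x₂ A₂ B₁ x₁ - ρ₂ x₂ B₂ B₁ x₁)
      = ∑ q ∈ (Finset.univ.filter (fun q : Pref X₁ × Pref X₂ =>
          (∀ y ∈ B₁, y ≠ x₁ → q.1.1 x₁ y) ∧ (∀ y ∈ A₂, y ≠ x₂ → q.2.1 x₂ y))) \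
          (Finset.univ.filter (fun q : Pref X₁ × Pref X₂ =>
          (∀ y ∈ B₁, y ≠ x₁ → q.1.1 x₁ y) ∧ (∀ y ∈ B₂, y ≠ x₂ → q.2.1 x₂ y))), μ q := by
    rw [Finset.sum_sdiff_eq_sub h13, ← e3, ← e4]; ring
  have rhs_eq : ρ₁ x₁ A₁ * (ρ₂ x₂ A₂ A₁ x₁ - ρ₂ x₂ B₂ A₁ x₁)
      = ∑ q ∈ (Finset.univ.filter (fun q : Pref X₁ × Pref X₂ =>
          (∀ y ∈ A₁, y ≠ x₁ → q.1.1 x₁ y) ∧ (∀ y ∈ A₂, y ≠ x₂ → q.2.1 x₂ y))) \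
          (Finset.univ.filter (fun q : Pref X₁ × Pref X₂ =>
          (∀ y ∈ A₁, y ≠ x₁ → q.1.1 x₁ y) ∧ (∀ y ∈ B₂, y ≠ x₂ → q.2.1 x₂ y))), μ q := by
    rw [Finset.sum_sdiff_eq_sub h24, ← e1, ← e2]; ring
  rw [lhs_eq, rhs_eq]
  apply Finset.sum_le_sum_of_subset_of_nonneg
  · intro q hq
    simp only [Finset.mem_sdiff, Finset.mem_filter, Finset.mem_univ, true_and] at hq ⊢
    obtain ⟨⟨hB1, hA2⟩, hnot⟩ := hq
    refine ⟨⟨fun y hy => hB1 y (hAB₁ hy), hA2⟩, fun ⟨_, hB2⟩ => hnot ⟨hB1, hB2⟩⟩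
  · intro q _ _
    exact hμ0 q
end
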